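/- arXiv:1704.03852 — 4 statements merged into one kernel-verified Lean document; each statement's English description precedes it below -/
import Mathlib

section
/- The point (t₁,t₂) = (1/√2, 1/√2) is a critical point of the function F(t₁,t₂) = −(π³/(t₁³t₂³))·[16t₁⁴t₂⁴ − 56(t₁⁴t₂² + t₂⁴t₁²) + 9(t₁⁴ + t₂⁴) − 14t₁²t₂²] on (0,∞)², and F(1/√2, 1/√2) = 96π³. -/
/-!
`F` is symmetric, so only `∂F/∂t₁` needs computing. By the quotient rule its numerator on the
diagonal `t₁ = t₂ = a` is `16a⁸ - 4a⁴ = 4a⁴(4a⁴ - 1)`, which vanishes for `a² = 1/2`.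
-/

open Real

noncomputable def energy (t₁ t₂ : ℝ) : ℝ :=
  -(π^3/(t₁^3*t₂^3)) *
    (16*t₁^4*t₂^4 - 56*(t₁^4*t₂^2 + t₂^4*t₁^2) + 9*(t₁^4 + t₂^4) - 14*t₁^2*t₂^2)

theorem energy_comm (s t : ℝ) : energy s t = energy t s := by
  unfold energy
  ring

theorem hasDerivAt_energy_left {s : ℝ} (t : ℝ) (hs : s ≠ 0) (ht : t ≠ 0) :
    HasDerivAt (fun x => energy x t)
      (-π^3 * (16*s^4*t^4 - 56*s^2*t^2*(s^2 - t^2) + 9*s^4 - 27*t^4 + 14*s^2*t^2) /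
        (s^4*t^3)) s := by
  have hden : HasDerivAt (fun x => x^3*t^3) (3*s^2*t^3) s := by
    simpa using (hasDerivAt_pow 3 s).mul_const (t^3)
  have h4 : HasDerivAt (fun x => x^4) (4*s^3) s := by simpa using hasDerivAt_pow 4 s
  have h2 : HasDerivAt (fun x => x^2) (2*s) s := by simpa using hasDerivAt_pow 2 s
  have hP : HasDerivAt
      (fun x => 16*x^4*t^4 - 56*(x^4*t^2 + t^4*x^2) + 9*(x^4 + t^4) - 14*x^2*t^2)
      (16*(4*s^3)*t^4 - 56*(4*s^3*t^2 + t^4*(2*s)) + 9*(4*s^3) - 14*(2*s)*t^2) s :=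
    ((((h4.const_mul 16).mul_const (t^4)).sub
      (((h4.mul_const (t^2)).add (h2.const_mul (t^4))).const_mul 56)).add
      ((h4.add_const (t^4)).const_mul 9)).sub ((h2.const_mul 14).mul_const (t^2))
  refine (((hasDerivAt_const s (π^3)).fun_div hden (by positivity)).fun_neg.fun_mul
    hP).congr_deriv ?_
  field_simp
  ring

theorem hasDerivAt_energy_left_of_sq_eq_half {a : ℝ} (ha : a^2 = 1/2) :
    HasDerivAt (fun x => energy x a) 0 a := by
  have ha0 : a ≠ 0 := by rintro rfl; norm_num at ha
  have hnum : 16*a^4*a^4 - 56*a^2*a^2*(a^2 - a^2) + 9*a^4 - 27*a^4 + 14*a^2*a^2 = 0 := by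
    linear_combination 8*a^4*(2*a^2 + 1) * ha
  exact (hasDerivAt_energy_left a ha0 ha0).congr_deriv (by rw [hnum]; simp)

theorem energy_diag_of_sq_eq_half {a : ℝ} (ha : a^2 = 1/2) : energy a a = 96*π^3 := by
  have h6 : a^3*a^3 = (a^2)^3 := by ring
  have h4 : a^4 = (a^2)^2 := by ring
  simp only [energy, h6, h4, ha]
  ring

/-- `(t₁,t₂) = (1/√2, 1/√2)` is a critical point of the energy
`F(t₁,t₂) = −(π³/(t₁³t₂³))[16t₁⁴t₂⁴ − 56(t₁⁴t₂² + t₂⁴t₁²) + 9(t₁⁴+t₂⁴) − 14t₁²t₂²]`,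
with `F(1/√2,1/√2) = 96π³`. -/
theorem stmt_3 :
    let F : ℝ → ℝ → ℝ := fun t₁ t₂ =>
      -(π^3/(t₁^3*t₂^3)) *
        (16*t₁^4*t₂^4 - 56*(t₁^4*t₂^2 + t₂^4*t₁^2) + 9*(t₁^4 + t₂^4) - 14*t₁^2*t₂^2)
    deriv (fun s => F s (1/Real.sqrt 2)) (1/Real.sqrt 2) = 0 ∧
    deriv (fun s => F (1/Real.sqrt 2) s) (1/Real.sqrt 2) = 0 ∧
    F (1/Real.sqrt 2) (1/Real.sqrt 2) = 96*π^3 := by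
  intro F
  have ha : (1 / √2 : ℝ)^2 = 1/2 := by rw [div_pow, one_pow, sq_sqrt zero_le_two]
  have hcrit := (hasDerivAt_energy_left_of_sq_eq_half ha).deriv
  have hswap : (fun s => energy (1/√2) s) = fun s => energy s (1/√2) :=
    funext fun s => energy_comm _ s
  refine ⟨hcrit, ?_, energy_diag_of_sq_eq_half ha⟩
  change deriv (fun s => energy (1/√2) s) _ = 0
  rw [hswap, hcrit]
end

section
/- Let I_{i,j}(a) = ∫_{-1}^{1} a^j s^i / [(1 + s/√2)² (1 + (a²−1)s²)^{11/2}] ds for a > 1. If j − i = 1 and i < 10, then lim_{a→∞} I_{i,j}(a) = ∫_{-∞}^{∞} t^i/(t²+1)^{11/2} dt. If j − i < 1 and j < 11, then lim_{a→∞} I_{i,j}(a) = 0. -/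
open Real Filter MeasureTheory

/-- `I_{i,j}(a) = ∫_{-1}^1 a^j s^i / ((1 + s/√2)² (1 + (a²−1)s²)^{11/2}) ds`. -/
noncomputable def Iij (i j : ℕ) (a : ℝ) : ℝ :=
  ∫ s in (-1:ℝ)..1,
    a^j * s^i / ((1 + s/Real.sqrt 2)^2 * (1 + (a^2 - 1)*s^2) ^ ((11:ℝ)/2))

/-- The integrand after the substitution `t = a s`. -/
noncomputable def gfun (i : ℕ) (a t : ℝ) : ℝ :=
  t ^ i / ((1 + t / (a * Real.sqrt 2)) ^ 2 * (1 + (1 - (a ^ 2)⁻¹) * t ^ 2) ^ ((11:ℝ)/2))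

lemma rpow_half_nat (x : ℝ) (hx : 0 ≤ x) (n : ℕ) :
    x ^ ((n:ℝ)/2) = Real.sqrt x ^ n := by
  rw [← Real.rpow_natCast (Real.sqrt x) n, Real.sqrt_eq_rpow, ← Real.rpow_mul hx]
  congr 1
  ring

lemma sub_eq (i : ℕ) {a : ℝ} (ha : 0 < a) :
    Iij i (i+1) a = ∫ t in (-a)..a, gfun i a t := by
  have ha' : a ≠ 0 := ha.ne'
  have key : ∀ s : ℝ, a^(i+1) * s^i /
      ((1 + s/Real.sqrt 2)^2 * (1 + (a^2 - 1)*s^2) ^ ((11:ℝ)/2))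
      = a * gfun i a (a * s) := by
    intro s
    unfold gfun
    have h1 : a * s / (a * Real.sqrt 2) = s / Real.sqrt 2 := mul_div_mul_left _ _ ha'
    have h2 : 1 + (1 - (a ^ 2)⁻¹) * (a * s) ^ 2 = 1 + (a^2 - 1) * s^2 := by
      field_simp
    rw [h1, h2, mul_pow]
    ring
  rw [Iij,
    intervalIntegral.integral_congr (g := fun s => a * gfun i a (a * s)) (fun s _ => key s),
    intervalIntegral.integral_const_mul,
    intervalIntegral.integral_comp_mul_left (fun t => gfun i a t) ha']
  simp [smul_eq_mul, ← mul_assoc, mul_inv_cancel₀ ha']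

set_option maxHeartbeats 1000000 in
lemma case1 (i : ℕ) (hi : i < 10) :
    Tendsto (fun a : ℝ => Iij i (i+1) a) atTop
      (nhds (∫ t : ℝ, t^i / (t^2 + 1) ^ ((11:ℝ)/2))) := by
  have hsq : Real.sqrt 2 ^ 2 = 2 := Real.sq_sqrt (by norm_num)
  have hsnn : (0:ℝ) ≤ Real.sqrt 2 := Real.sqrt_nonneg 2
  have hr1 : 1 < Real.sqrt 2 := by nlinarith
  have hc1 : 0 < 1 - (Real.sqrt 2)⁻¹ := by
    rw [sub_pos]; exact inv_lt_one_of_one_lt₀ hr1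
  set c1 : ℝ := (1 - (Real.sqrt 2)⁻¹) ^ 2 with hc1def
  have hc1pos : 0 < c1 := by positivity
  set C : ℝ := (c1 * ((3:ℝ)/4) ^ ((11:ℝ)/2))⁻¹ with hC
  have hmain : Tendsto (fun a : ℝ => ∫ t : ℝ, Set.indicator (Set.Ioc (-a) a) (gfun i a) t)
      atTop (nhds (∫ t : ℝ, t^i / (t^2 + 1) ^ ((11:ℝ)/2))) := by
    apply tendsto_integral_filter_of_dominated_convergence (bound := fun t => C * (1 + t^2)⁻¹)
    · filter_upwards with a
      have hm : Measurable (gfun i a) := by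
        unfold gfun; fun_prop
      exact (hm.indicator measurableSet_Ioc).aestronglyMeasurable
    · filter_upwards [eventually_ge_atTop (2:ℝ)] with a ha
      apply ae_of_all
      intro t
      have hapos : (0:ℝ) < a := by linarith
      by_cases ht : t ∈ Set.Ioc (-a) a
      · rw [Set.indicator_of_mem ht]
        obtain ⟨ht1, ht2⟩ := ht
        set d1 := (1 + t / (a * Real.sqrt 2)) ^ 2 with hd1def
        set d2 := (1 + (1 - (a ^ 2)⁻¹) * t ^ 2) ^ ((11:ℝ)/2) with hd2def
        have hd1 : c1 ≤ d1 := by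
          apply pow_le_pow_left₀ hc1.le
          have h0 : (0:ℝ) < a * Real.sqrt 2 := by positivity
          have hdiv : (-a) / (a * Real.sqrt 2) ≤ t / (a * Real.sqrt 2) := by
            gcongr
          have heq : (-a) / (a * Real.sqrt 2) = -(Real.sqrt 2)⁻¹ := by
            rw [neg_div, show a / (a * Real.sqrt 2) = (a * 1) / (a * Real.sqrt 2) by rw [mul_one],
              mul_div_mul_left _ _ hapos.ne', one_div]
          rw [heq] at hdiv
          linarith
        have hbase : (3:ℝ)/4 * (1 + t^2) ≤ 1 + (1 - (a^2)⁻¹) * t^2 := by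
          have h4 : (a^2)⁻¹ ≤ (4:ℝ)⁻¹ := by
            apply inv_anti₀ (by norm_num)
            nlinarith
          nlinarith [sq_nonneg t]
        have hd2 : ((3:ℝ)/4) ^ ((11:ℝ)/2) * (1 + t^2) ^ ((11:ℝ)/2) ≤ d2 := by
          rw [← Real.mul_rpow (by norm_num) (by positivity)]
          exact Real.rpow_le_rpow (by positivity) hbase (by norm_num)
        have hnum : |t| ^ i ≤ (1 + t^2) ^ ((9:ℝ)/2) := by
          have h1 : |t| ≤ (1 + t^2) ^ ((1:ℝ)/2) := by
            rw [show ((1:ℝ)/2 : ℝ) = ((1:ℕ):ℝ)/2 by norm_num, rpow_half_nat _ (by positivity),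
              pow_one]
            rw [show |t| = Real.sqrt (t^2) from (Real.sqrt_sq_eq_abs t).symm]
            exact Real.sqrt_le_sqrt (by nlinarith)
          calc |t|^i ≤ ((1 + t^2) ^ ((1:ℝ)/2))^i := pow_le_pow_left₀ (abs_nonneg t) h1 i
            _ = (1 + t^2) ^ ((i:ℝ)/2) := by
                rw [← Real.rpow_natCast ((1+t^2) ^ ((1:ℝ)/2)) i, ← Real.rpow_mul (by positivity)]
                congr 1; ring
            _ ≤ (1 + t^2) ^ ((9:ℝ)/2) := by
                apply Real.rpow_le_rpow_of_exponent_le (by nlinarith)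
                have : (i:ℝ) ≤ 9 := by exact_mod_cast Nat.lt_succ_iff.mp hi
                linarith
        have hd1pos : 0 < d1 := lt_of_lt_of_le hc1pos hd1
        have hd2pos : 0 < d2 := lt_of_lt_of_le (by positivity) hd2
        have hnorm : ‖gfun i a t‖ = |t|^i / (d1 * d2) := by
          rw [gfun, Real.norm_eq_abs, abs_div, abs_pow,
            abs_of_pos (by positivity : (0:ℝ) < d1 * d2)]
        rw [hnorm]
        calc |t|^i / (d1 * d2)
            ≤ (1+t^2) ^ ((9:ℝ)/2) / (c1 * (((3:ℝ)/4) ^ ((11:ℝ)/2) * (1+t^2) ^ ((11:ℝ)/2))) := by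
              apply div_le_div₀ (by positivity) hnum (by positivity)
              exact mul_le_mul hd1 hd2 (by positivity) hd1pos.le
          _ = C * (1 + t^2)⁻¹ := by
              have hsplit : ((1:ℝ)+t^2) ^ ((11:ℝ)/2) = (1+t^2) ^ ((9:ℝ)/2) * (1+t^2) ^ (1:ℝ) := by
                rw [← Real.rpow_add (by positivity)]
                norm_num
              rw [hsplit, Real.rpow_one, hC]
              have h9 : (0:ℝ) < (1+t^2) ^ ((9:ℝ)/2) := by positivity
              have h34 : (0:ℝ) < ((3:ℝ)/4) ^ ((11:ℝ)/2) := by positivity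
              field_simp
      · rw [Set.indicator_of_notMem ht]
        simp only [norm_zero]
        positivity
    · exact (integrable_inv_one_add_sq.const_mul C)
    · apply ae_of_all
      intro t
      have hev : (fun a : ℝ => gfun i a t) =ᶠ[atTop]
          fun a => Set.indicator (Set.Ioc (-a) a) (gfun i a) t := by
        filter_upwards [eventually_gt_atTop |t|] with a ha
        have h := abs_lt.mp ha
        exact (Set.indicator_of_mem (Set.mem_Ioc.mpr ⟨h.1, h.2.le⟩) _).symm
      apply Tendsto.congr' hev
      have l1 : Tendsto (fun a : ℝ => t / (a * Real.sqrt 2)) atTop (nhds 0) := by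
        have heq : (fun a : ℝ => t / (a * Real.sqrt 2)) = fun a => (t / Real.sqrt 2) * a⁻¹ := by
          funext a
          rw [mul_comm a, ← div_div, div_eq_mul_inv]
        rw [heq]
        simpa using tendsto_inv_atTop_zero.const_mul (t / Real.sqrt 2)
      have l2 : Tendsto (fun a : ℝ => (1 + t/(a*Real.sqrt 2))^2) atTop (nhds 1) := by
        have h2 := (l1.const_add (1:ℝ)).pow 2
        norm_num at h2
        exact h2
      have l3 : Tendsto (fun a : ℝ => ((a:ℝ)^2)⁻¹) atTop (nhds 0) :=
        (tendsto_pow_atTop two_ne_zero).inv_tendsto_atTop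
      have l4 : Tendsto (fun a : ℝ => 1 + (1 - (a^2)⁻¹) * t^2) atTop (nhds (1 + t^2)) := by
        have h1 := (((l3.const_sub (1:ℝ))).mul_const (t^2)).const_add (1:ℝ)
        norm_num at h1
        exact h1
      have l5 : Tendsto (fun a : ℝ => (1 + (1 - (a^2)⁻¹) * t^2) ^ ((11:ℝ)/2)) atTop
          (nhds ((1+t^2) ^ ((11:ℝ)/2))) := by
        have hcont : ContinuousAt (fun x : ℝ => x ^ ((11:ℝ)/2)) (1 + t^2) :=
          Real.continuousAt_rpow_const _ _ (Or.inl (by positivity))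
        exact hcont.tendsto.comp l4
      have l6 := l2.mul l5
      have hne : (1:ℝ) * (1+t^2) ^ ((11:ℝ)/2) ≠ 0 := by positivity
      have l7 := (tendsto_const_nhds (x := (t^i : ℝ)) (f := atTop)).div l6 hne
      have hval : t^i / ((1:ℝ) * (1+t^2) ^ ((11:ℝ)/2)) = t^i / (t^2+1) ^ ((11:ℝ)/2) := by
        rw [one_mul, add_comm]
      rw [hval] at l7
      exact l7
  apply Tendsto.congr' ?_ hmain
  filter_upwards [eventually_gt_atTop (0:ℝ)] with a ha
  rw [integral_indicator measurableSet_Ioc, ← intervalIntegral.integral_of_le (by linarith : -a ≤ a),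
    ← sub_eq i ha]

set_option maxHeartbeats 1000000 in
lemma case2 (i j : ℕ) (hji : j ≤ i) (hj : j < 11) :
    Tendsto (fun a : ℝ => Iij i j a) atTop (nhds 0) := by
  have hsq : Real.sqrt 2 ^ 2 = 2 := Real.sq_sqrt (by norm_num)
  have hsnn : (0:ℝ) ≤ Real.sqrt 2 := Real.sqrt_nonneg 2
  have hr1 : 1 < Real.sqrt 2 := by nlinarith
  have hc1 : 0 < 1 - (Real.sqrt 2)⁻¹ := by
    rw [sub_pos]; exact inv_lt_one_of_one_lt₀ hr1
  set c1 : ℝ := (1 - (Real.sqrt 2)⁻¹) ^ 2 with hc1def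
  have hc1pos : 0 < c1 := by positivity
  set μ : Measure ℝ := volume.restrict (Set.Ioc (-1:ℝ) 1) with hμ
  set F : ℝ → ℝ → ℝ := fun a s =>
    a^j * s^i / ((1 + s/Real.sqrt 2)^2 * (1 + (a^2 - 1)*s^2) ^ ((11:ℝ)/2)) with hF
  have hIij : ∀ a : ℝ, Iij i j a = ∫ s, F a s ∂μ := by
    intro a
    rw [Iij, intervalIntegral.integral_of_le (by norm_num : (-1:ℝ) ≤ 1)]
  have hmain : Tendsto (fun a : ℝ => ∫ s, F a s ∂μ) atTop (nhds (∫ _ : ℝ, (0:ℝ) ∂μ)) := by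
    apply tendsto_integral_filter_of_dominated_convergence
      (bound := fun _ => (2:ℝ)^11 * c1⁻¹)
    · filter_upwards with a
      have hm : Measurable (F a) := by
        rw [hF]; fun_prop
      exact hm.aestronglyMeasurable
    · filter_upwards [eventually_ge_atTop (2:ℝ)] with a ha
      rw [ae_restrict_iff' measurableSet_Ioc]
      apply ae_of_all
      intro s hs
      have hapos : (0:ℝ) < a := by linarith
      have hsabs : |s| ≤ 1 := abs_le.2 ⟨hs.1.le, hs.2⟩
      have ha1 : (3:ℝ) ≤ a^2 - 1 := by nlinarith
      set d1 := (1 + s / Real.sqrt 2) ^ 2 with hd1def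
      set d2 := (1 + (a^2 - 1) * s^2) ^ ((11:ℝ)/2) with hd2def
      have hd1 : c1 ≤ d1 := by
        apply pow_le_pow_left₀ hc1.le
        have hdiv : (-1) / Real.sqrt 2 ≤ s / Real.sqrt 2 := by
          gcongr
          exact hs.1.le
        rw [neg_div, one_div] at hdiv
        linarith
      have hbase1 : (1:ℝ) ≤ 1 + (a^2-1)*s^2 := by nlinarith [sq_nonneg s]
      have hd2a : (1 + (a^2-1)*s^2) ^ ((j:ℝ)/2) ≤ d2 := by
        apply Real.rpow_le_rpow_of_exponent_le hbase1
        have : (j:ℝ) ≤ 11 := by exact_mod_cast hj.le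
        linarith
      have hd2b : ((a^2-1)*s^2) ^ ((j:ℝ)/2) ≤ (1 + (a^2-1)*s^2) ^ ((j:ℝ)/2) := by
        apply Real.rpow_le_rpow (by positivity) (by linarith) (by positivity)
      have hconv : ((a^2-1)*s^2) ^ ((j:ℝ)/2) = Real.sqrt (a^2-1) ^ j * |s| ^ j := by
        rw [rpow_half_nat _ (by positivity), Real.sqrt_mul (by linarith), Real.sqrt_sq_eq_abs,
          mul_pow]
      have hd2 : Real.sqrt (a^2-1) ^ j * |s| ^ j ≤ d2 := by
        rw [← hconv]; exact hd2b.trans hd2a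
      have hd1pos : 0 < d1 := lt_of_lt_of_le hc1pos hd1
      have hd2pos : 0 < d2 := Real.rpow_pos_of_pos (by nlinarith) _
      have hnorm : ‖F a s‖ = a^j * |s|^i / (d1 * d2) := by
        rw [hF]
        simp only []
        rw [Real.norm_eq_abs, abs_div, abs_mul, abs_pow, abs_pow, abs_of_pos hapos,
          abs_of_pos (by positivity : (0:ℝ) < d1 * d2)]
      rw [hnorm, div_le_iff₀ (by positivity : (0:ℝ) < d1 * d2)]
      have hkey : a ≤ Real.sqrt 2 * Real.sqrt (a^2 - 1) := by
        rw [← Real.sqrt_mul (by norm_num : (0:ℝ) ≤ 2)]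
        rw [show a = Real.sqrt (a^2) from (Real.sqrt_sq hapos.le).symm]
        apply Real.sqrt_le_sqrt
        rw [Real.sq_sqrt (by nlinarith : (0:ℝ) ≤ a^2)]
        nlinarith
      calc a^j * |s|^i
          ≤ (Real.sqrt 2 * Real.sqrt (a^2-1))^j * |s|^j :=
            mul_le_mul (pow_le_pow_left₀ hapos.le hkey j)
              (pow_le_pow_of_le_one (abs_nonneg s) hsabs hji) (by positivity) (by positivity)
        _ = Real.sqrt 2 ^ j * (Real.sqrt (a^2-1)^j * |s|^j) := by rw [mul_pow]; ring
        _ ≤ 2^11 * (Real.sqrt (a^2-1)^j * |s|^j) := by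
            have h1 : Real.sqrt 2 ^ j ≤ 2^j := pow_le_pow_left₀ hsnn (by nlinarith) j
            have h2 : (2:ℝ)^j ≤ 2^11 := pow_le_pow_right₀ (by norm_num) hj.le
            exact mul_le_mul_of_nonneg_right (h1.trans h2) (by positivity)
        _ ≤ 2^11 * d2 := mul_le_mul_of_nonneg_left hd2 (by positivity)
        _ = (2^11 * c1⁻¹) * (c1 * d2) := by
            field_simp
        _ ≤ (2^11 * c1⁻¹) * (d1 * d2) := by
            apply mul_le_mul_of_nonneg_left _ (by positivity)
            exact mul_le_mul_of_nonneg_right hd1 hd2pos.le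
    · exact integrable_const _
    · have hzero : ∀ᵐ s ∂μ, s ≠ (0:ℝ) := by
        rw [ae_iff]
        simp only [ne_eq, not_not]
        have hsub : {s : ℝ | s = 0} ⊆ {(0:ℝ)} := by intro x hx; simpa using hx
        apply measure_mono_null hsub
        rw [hμ, Measure.restrict_apply (measurableSet_singleton 0)]
        exact measure_mono_null Set.inter_subset_left (by simp)
      have hmem : ∀ᵐ s ∂μ, s ∈ Set.Ioc (-1:ℝ) 1 :=
        (ae_restrict_iff' measurableSet_Ioc).2 (ae_of_all _ fun s hs => hs)
      filter_upwards [hzero, hmem] with s hs0 hsmem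
      have hsabs : |s| ≤ 1 := abs_le.2 ⟨hsmem.1.le, hsmem.2⟩
      have hsabspos : 0 < |s| := abs_pos.2 hs0
      set K : ℝ := 2^11 / (c1 * |s|^11) with hK
      refine squeeze_zero_norm' (a := fun b : ℝ => K * ((b:ℝ)^(11-j))⁻¹) ?_ ?_
      · filter_upwards [eventually_ge_atTop (2:ℝ)] with a ha
        have hapos : (0:ℝ) < a := by linarith
        set d1 := (1 + s / Real.sqrt 2) ^ 2 with hd1def
        set d2 := (1 + (a^2 - 1) * s^2) ^ ((11:ℝ)/2) with hd2def
        have hd1 : c1 ≤ d1 := by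
          apply pow_le_pow_left₀ hc1.le
          have hdiv : (-1) / Real.sqrt 2 ≤ s / Real.sqrt 2 := by
            gcongr
            exact hsmem.1.le
          rw [neg_div, one_div] at hdiv
          linarith
        have hd2 : (a/2)^11 * |s|^11 ≤ d2 := by
          have ham : (0:ℝ) ≤ (a^2-1)*s^2 :=
            mul_nonneg (by nlinarith : (0:ℝ) ≤ a^2-1) (sq_nonneg s)
          have h1 : ((a^2-1)*s^2) ^ (((11:ℕ):ℝ)/2) ≤ d2 := by
            apply Real.rpow_le_rpow ham (by linarith) (by positivity)
          rw [rpow_half_nat _ ham, Real.sqrt_mul (by nlinarith),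
            Real.sqrt_sq_eq_abs, mul_pow] at h1
          refine le_trans ?_ h1
          apply mul_le_mul_of_nonneg_right _ (by positivity)
          apply pow_le_pow_left₀ (by positivity)
          rw [show a/2 = Real.sqrt ((a/2)^2) from (Real.sqrt_sq (by positivity)).symm]
          apply Real.sqrt_le_sqrt
          nlinarith
        have hd1pos : 0 < d1 := lt_of_lt_of_le hc1pos hd1
        have hd2pos : 0 < d2 := Real.rpow_pos_of_pos
          (by nlinarith [mul_nonneg (by nlinarith : (0:ℝ) ≤ a^2-1) (sq_nonneg s)]) _
        have hnorm : ‖F a s‖ = a^j * |s|^i / (d1 * d2) := by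
          rw [hF]
          simp only []
          rw [Real.norm_eq_abs, abs_div, abs_mul, abs_pow, abs_pow, abs_of_pos hapos,
            abs_of_pos (by positivity : (0:ℝ) < d1 * d2)]
        rw [hnorm]
        have hsi : |s|^i ≤ 1 := pow_le_one₀ (abs_nonneg s) hsabs
        calc a^j * |s|^i / (d1 * d2)
            ≤ a^j * 1 / (c1 * ((a/2)^11 * |s|^11)) := by
              apply div_le_div₀ (by positivity)
                (mul_le_mul_of_nonneg_left hsi (by positivity)) (by positivity)
              exact mul_le_mul hd1 hd2 (by positivity) hd1pos.le
          _ = K * ((a:ℝ)^(11-j))⁻¹ := by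
              rw [hK]
              have hpow : (a:ℝ)^(11:ℕ) = a^j * a^(11-j) := by
                rw [← pow_add, Nat.add_sub_cancel' hj.le]
              have hane : (a:ℝ) ≠ 0 := hapos.ne'
              field_simp
              rw [hpow]
      · have hpow : Tendsto (fun a : ℝ => (a:ℝ)^(11-j)) atTop atTop :=
          tendsto_pow_atTop (by omega)
        have := (hpow.inv_tendsto_atTop).const_mul K
        simpa using this
  have h0 : (∫ _ : ℝ, (0:ℝ) ∂μ) = 0 := by simp
  rw [h0] at hmain
  exact hmain.congr (fun a => (hIij a).symm)

/-- If `j − i = 1` and `i < 10`, then `I_{i,j}(a) → ∫_ℝ t^i/(t²+1)^{11/2} dt` as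
`a → ∞`; if `j − i < 1` and `j < 11`, then `I_{i,j}(a) → 0`. -/
theorem stmt_7 (i j : ℕ) :
    (j = i + 1 → i < 10 →
      Tendsto (fun a : ℝ => Iij i j a) atTop
        (nhds (∫ t : ℝ, t^i / (t^2 + 1) ^ ((11:ℝ)/2)))) ∧
    ((j:ℤ) - (i:ℤ) < 1 → j < 11 →
      Tendsto (fun a : ℝ => Iij i j a) atTop (nhds 0)) := by
  constructor
  · intro hj hi
    subst hj
    exact case1 i hi
  · intro hji hj
    exact case2 i j (by omega) hj
end

section
/- lim_{a→∞} [ 9·∫_{-1}^{1} a/[(1+s/√2)²(1+(a²−1)s²)^{11/2}] ds − 144·∫_{-1}^{1} a³s²/[(1+s/√2)²(1+(a²−1)s²)^{11/2}] ds ] = 9·∫_{-∞}^{∞} dt/(t²+1)^{11/2} − 144·∫_{-∞}^{∞} t²/(t²+1)^{11/2} dt = −256/35. -/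
open Real Filter MeasureTheory

/-!
Substituting `s = t / a` turns `I_{i,i+1}(a)` into
`∫_{-a}^{a} t^i / ((1 + t/(a√2))² (1 + t² - t²/a²)^{11/2}) dt`. For `i ≤ 2` and `a ≥ 2` the
integrand is dominated by `64 / (1 + t²)`, and it converges pointwise to `t^i / (t² + 1)^{11/2}`,
so dominated convergence gives the limit. Under `t = tan θ`, `u = sin θ` the two limiting
integrals become `∫_{-1}^{1} (1 - u²)⁴ du = 256/315` and `∫_{-1}^{1} u² (1 - u²)³ du = 32/315`.
-/

open Topology

theorem hasDerivAt_sin_arctan (t : ℝ) :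
    HasDerivAt (fun t => sin (arctan t)) (cos (arctan t) ^ 3) t := by
  have h := (hasDerivAt_sin (arctan t)).comp t (hasDerivAt_arctan t)
  rwa [← cos_sq_arctan, ← pow_succ'] at h

theorem tendsto_sin_arctan_atTop : Tendsto (fun t => sin (arctan t)) atTop (𝓝 1) := by
  simpa [Function.comp_def] using
    (continuous_sin.tendsto (π / 2)).comp
      (tendsto_nhds_of_tendsto_nhdsWithin tendsto_arctan_atTop)

theorem tendsto_sin_arctan_atBot : Tendsto (fun t => sin (arctan t)) atBot (𝓝 (-1)) := by
  simpa [Function.comp_def] using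
    (continuous_sin.tendsto (-(π / 2))).comp
      (tendsto_nhds_of_tendsto_nhdsWithin tendsto_arctan_atBot)

theorem integrable_cos_arctan_pow_three_smul {E : Type*} [NormedAddCommGroup E] [NormedSpace ℝ E]
    {p : ℝ → E} (hp : Continuous p) :
    Integrable (fun t => cos (arctan t) ^ 3 • p (sin (arctan t))) := by
  obtain ⟨C, hC⟩ :=
    isCompact_Icc.exists_bound_of_continuousOn (hp.continuousOn (s := Set.Icc (-1) 1))
  refine (integrable_inv_one_add_sq.const_mul C).mono' (by fun_prop) (ae_of_all _ fun t => ?_)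
  have hcos := cos_arctan_pos t
  have hp_le : ‖p (sin (arctan t))‖ ≤ C := hC _ ⟨neg_one_le_sin _, sin_le_one _⟩
  calc ‖cos (arctan t) ^ 3 • p (sin (arctan t))‖
      = cos (arctan t) * cos (arctan t) ^ 2 * ‖p (sin (arctan t))‖ := by
        rw [norm_smul, norm_of_nonneg (by positivity)]; ring
    _ ≤ 1 * cos (arctan t) ^ 2 * C := by gcongr; exact cos_le_one _
    _ = C * (1 + t ^ 2)⁻¹ := by rw [cos_sq_arctan]; ring

theorem integral_cos_arctan_pow_three_smul {E : Type*} [NormedAddCommGroup E] [NormedSpace ℝ E]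
    [CompleteSpace E] {p : ℝ → E} (hp : Continuous p) :
    ∫ t, cos (arctan t) ^ 3 • p (sin (arctan t)) = ∫ u in (-1)..1, p u := by
  have hP : ∀ t, HasDerivAt (fun t => ∫ u in (0:ℝ)..sin (arctan t), p u)
      (cos (arctan t) ^ 3 • p (sin (arctan t))) t := fun t =>
    ((hp.integral_hasStrictDerivAt 0 _).hasDerivAt).scomp t (hasDerivAt_sin_arctan t)
  have hlim : ∀ {l : Filter ℝ} {b : ℝ}, Tendsto (fun t => sin (arctan t)) l (𝓝 b) →
      Tendsto (fun t => ∫ u in (0:ℝ)..sin (arctan t), p u) l (𝓝 (∫ u in (0:ℝ)..b, p u)) :=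
    fun h => ((intervalIntegral.continuous_primitive hp.intervalIntegrable 0).tendsto _).comp h
  rw [integral_of_hasDerivAt_of_tendsto hP (integrable_cos_arctan_pow_three_smul hp)
    (hlim tendsto_sin_arctan_atBot) (hlim tendsto_sin_arctan_atTop),
    intervalIntegral.integral_interval_sub_left (hp.intervalIntegrable _ _)
      (hp.intervalIntegrable _ _)]

theorem cos_arctan_pow (n : ℕ) (t : ℝ) :
    cos (arctan t) ^ n = ((t ^ 2 + 1) ^ ((n : ℝ) / 2))⁻¹ := by
  rw [cos_arctan, sqrt_eq_rpow, one_div, inv_pow, ← rpow_natCast, ← rpow_mul (by positivity),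
    add_comm]
  ring_nf

theorem one_div_rpow_eleven_half_eq (t : ℝ) :
    1 / (t ^ 2 + 1) ^ ((11 : ℝ) / 2) = cos (arctan t) ^ 3 • (1 - sin (arctan t) ^ 2) ^ 4 := by
  rw [one_div, show (11 : ℝ) = (11 : ℕ) by norm_num, ← cos_arctan_pow, ← cos_sq',
    smul_eq_mul]
  ring

theorem sq_div_rpow_eleven_half_eq (t : ℝ) :
    t ^ 2 / (t ^ 2 + 1) ^ ((11 : ℝ) / 2) =
      cos (arctan t) ^ 3 • (sin (arctan t) ^ 2 * (1 - sin (arctan t) ^ 2) ^ 3) := by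
  have hsin : sin (arctan t) = t * cos (arctan t) := by
    rw [sin_arctan, cos_arctan, mul_one_div]
  rw [div_eq_mul_inv, show (11 : ℝ) = (11 : ℕ) by norm_num, ← cos_arctan_pow, ← cos_sq',
    smul_eq_mul, hsin]
  ring

theorem integral_one_sub_sq_pow_four : ∫ u in (-1 : ℝ)..1, (1 - u ^ 2) ^ 4 = 256 / 315 := by
  simp only [show ∀ u : ℝ, (1 - u ^ 2) ^ 4 = 1 - 4 * u ^ 2 + 6 * u ^ 4 - 4 * u ^ 6 + u ^ 8 from
    fun u => by ring]
  rw [intervalIntegral.integral_add, intervalIntegral.integral_sub, intervalIntegral.integral_add,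
    intervalIntegral.integral_sub] <;>
    first | exact (by fun_prop : Continuous _).intervalIntegrable _ _ | norm_num

theorem integral_sq_mul_one_sub_sq_pow_three :
    ∫ u in (-1 : ℝ)..1, u ^ 2 * (1 - u ^ 2) ^ 3 = 32 / 315 := by
  simp only [show ∀ u : ℝ, u ^ 2 * (1 - u ^ 2) ^ 3 = u ^ 2 - 3 * u ^ 4 + 3 * u ^ 6 - u ^ 8 from
    fun u => by ring]
  rw [intervalIntegral.integral_sub, intervalIntegral.integral_add,
    intervalIntegral.integral_sub] <;>
    first | exact (by fun_prop : Continuous _).intervalIntegrable _ _ | norm_num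

theorem integral_one_div_rpow_eleven_half :
    ∫ t : ℝ, 1 / (t ^ 2 + 1) ^ ((11 : ℝ) / 2) = 256 / 315 := by
  simp_rw [one_div_rpow_eleven_half_eq]
  rw [integral_cos_arctan_pow_three_smul (p := fun u => (1 - u ^ 2) ^ 4) (by fun_prop)]
  exact integral_one_sub_sq_pow_four

theorem integral_sq_div_rpow_eleven_half :
    ∫ t : ℝ, t ^ 2 / (t ^ 2 + 1) ^ ((11 : ℝ) / 2) = 32 / 315 := by
  simp_rw [sq_div_rpow_eleven_half_eq]
  rw [integral_cos_arctan_pow_three_smul (p := fun u => u ^ 2 * (1 - u ^ 2) ^ 3) (by fun_prop)]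
  exact integral_sq_mul_one_sub_sq_pow_three

theorem tendsto_intervalIntegral_neg_self_of_dominated {E : Type*} [NormedAddCommGroup E]
    [NormedSpace ℝ E] {F : ℝ → ℝ → E} {f : ℝ → E} (bound : ℝ → ℝ)
    (hF_meas : ∀ a, AEStronglyMeasurable (F a))
    (h_bound : ∀ᶠ a in atTop, ∀ t, |t| ≤ a → ‖F a t‖ ≤ bound t) (h_int : Integrable bound)
    (h_lim : ∀ t, Tendsto (fun a => F a t) atTop (𝓝 (f t))) :
    Tendsto (fun a => ∫ t in -a..a, F a t) atTop (𝓝 (∫ t, f t)) := by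
  have h_ind :
      Tendsto (fun a => ∫ t, (Set.Ioc (-a) a).indicator (F a) t) atTop (𝓝 (∫ t, f t)) := by
    refine tendsto_integral_filter_of_dominated_convergence (fun t => |bound t|)
      (.of_forall fun a => (hF_meas a).indicator measurableSet_Ioc) ?_ h_int.abs
      (ae_of_all _ fun t => (h_lim t).congr' ?_)
    · filter_upwards [h_bound] with a ha
      refine ae_of_all _ fun t => ?_
      by_cases ht : t ∈ Set.Ioc (-a) a
      · rw [Set.indicator_of_mem ht]
        exact (ha t (abs_le.2 ⟨ht.1.le, ht.2⟩)).trans (le_abs_self _)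
      · rw [Set.indicator_of_notMem ht, norm_zero]
        exact abs_nonneg _
    · filter_upwards [eventually_gt_atTop |t|] with a ha
      exact (Set.indicator_of_mem (show t ∈ Set.Ioc (-a) a from
        ⟨by linarith [neg_abs_le t], (le_abs_self t).trans ha.le⟩) _).symm
  refine h_ind.congr' ?_
  filter_upwards [eventually_ge_atTop 0] with a ha
  rw [intervalIntegral.integral_of_le (by linarith), integral_indicator measurableSet_Ioc]

noncomputable def anchorDenom (a s : ℝ) : ℝ :=
  (1 + s / √2) ^ 2 * (1 + (a ^ 2 - 1) * s ^ 2) ^ ((11 : ℝ) / 2)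

theorem Iij_succ_eq_integral_rescaled (i : ℕ) {a : ℝ} (ha : 0 < a) :
    Iij i (i + 1) a = ∫ t in -a..a, t ^ i / anchorDenom a (t / a) := by
  have h : ∀ s, a ^ (i + 1) * s ^ i / anchorDenom a s =
      a * ((a * s) ^ i / anchorDenom a (a * s / a)) :=
    fun s => by rw [mul_div_cancel_left₀ _ ha.ne']; ring
  calc Iij i (i + 1) a = a • ∫ s in (-1)..1, (a * s) ^ i / anchorDenom a (a * s / a) := by
        rw [smul_eq_mul, ← intervalIntegral.integral_const_mul]
        exact intervalIntegral.integral_congr fun s _ => h s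
    _ = _ := by
        rw [intervalIntegral.smul_integral_comp_mul_left (fun t => t ^ i / anchorDenom a (t / a)),
          mul_neg_one, mul_one]

theorem tendsto_anchorDenom_div (t : ℝ) :
    Tendsto (fun a => anchorDenom a (t / a)) atTop (𝓝 ((t ^ 2 + 1) ^ ((11 : ℝ) / 2))) := by
  set H : ℝ → ℝ := fun u => (1 + u / √2) ^ 2 * (t ^ 2 + 1 - u ^ 2) ^ ((11 : ℝ) / 2)
  have hH : ContinuousAt H 0 := by fun_prop (disch := positivity)
  have hlim := hH.tendsto.comp
    (tendsto_const_nhds.div_atTop tendsto_id : Tendsto (t / ·) atTop (𝓝 0))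
  rw [show H 0 = (t ^ 2 + 1) ^ ((11 : ℝ) / 2) by simp [H]] at hlim
  refine hlim.congr' ?_
  filter_upwards [eventually_ne_atTop 0] with a ha
  simp only [Function.comp_apply, H, anchorDenom]
  congr 3
  field_simp
  ring

theorem one_div_sixteen_le_sq_one_add_div_sqrt_two {s : ℝ} (hs : |s| ≤ 1) :
    1 / 16 ≤ (1 + s / √2) ^ 2 := by
  have hsqrt : 4 / 3 < √2 := by rw [lt_sqrt (by norm_num)]; norm_num
  have hs' : -(3 / 4) ≤ s / √2 := by
    rw [le_div_iff₀ (by positivity)]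
    nlinarith [neg_abs_le s]
  nlinarith

theorem anchorDenom_div_ge {a t : ℝ} (ha : 2 ≤ a) (ht : |t| ≤ a) :
    (t ^ 2 + 1) ^ 2 / 64 ≤ anchorDenom a (t / a) := by
  set b := 1 + (a ^ 2 - 1) * (t / a) ^ 2
  have hb_one : 1 ≤ b := le_add_of_nonneg_right (mul_nonneg (by nlinarith) (sq_nonneg _))
  have hb : (t ^ 2 + 1) / 2 ≤ b := by
    have : 1 / 2 ≤ (a ^ 2 - 1) / a ^ 2 := by rw [le_div_iff₀ (by positivity)]; nlinarith
    have : t ^ 2 / 2 ≤ (a ^ 2 - 1) * (t / a) ^ 2 := by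
      rw [div_pow, mul_div_assoc', mul_comm, mul_div_assoc]
      nlinarith [sq_nonneg t]
    linarith
  have hb_rpow : b ^ 2 ≤ b ^ ((11 : ℝ) / 2) := by
    rw [← rpow_natCast]
    exact rpow_le_rpow_of_exponent_le hb_one (by norm_num)
  have hs : |t / a| ≤ 1 := by
    rw [abs_div, abs_of_pos (show 0 < a by linarith)]
    exact div_le_one_of_le₀ ht (by linarith)
  calc (t ^ 2 + 1) ^ 2 / 64 = 1 / 16 * ((t ^ 2 + 1) / 2) ^ 2 := by ring
    _ ≤ (1 + t / a / √2) ^ 2 * b ^ ((11 : ℝ) / 2) :=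
        mul_le_mul (one_div_sixteen_le_sq_one_add_div_sqrt_two hs)
          ((pow_le_pow_left₀ (by positivity) hb 2).trans hb_rpow) (by positivity) (sq_nonneg _)

theorem norm_pow_div_anchorDenom_div_le {i : ℕ} (hi : i ≤ 2) {a t : ℝ} (ha : 2 ≤ a)
    (ht : |t| ≤ a) :
    ‖t ^ i / anchorDenom a (t / a)‖ ≤ 64 * (1 + t ^ 2)⁻¹ := by
  have hpow : |t| ^ i ≤ t ^ 2 + 1 := by
    interval_cases i
    · simp [sq_nonneg]
    · nlinarith [sq_abs t, abs_nonneg t]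
    · simp [sq_abs]
  have hD := anchorDenom_div_ge ha ht
  have hD_pos : 0 < anchorDenom a (t / a) := lt_of_lt_of_le (by positivity) hD
  rw [norm_div, norm_pow, Real.norm_eq_abs, Real.norm_eq_abs, abs_of_pos hD_pos]
  calc |t| ^ i / anchorDenom a (t / a) ≤ (t ^ 2 + 1) / ((t ^ 2 + 1) ^ 2 / 64) :=
        div_le_div₀ (by positivity) hpow (by positivity) hD
    _ = 64 * (1 + t ^ 2)⁻¹ := by field_simp; ring

theorem tendsto_Iij_succ {i : ℕ} (hi : i ≤ 2) :
    Tendsto (fun a => Iij i (i + 1) a) atTop (𝓝 (∫ t, t ^ i / (t ^ 2 + 1) ^ ((11 : ℝ) / 2))) := by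
  have h := tendsto_intervalIntegral_neg_self_of_dominated (fun t => 64 * (1 + t ^ 2)⁻¹)
    (fun a => (by unfold anchorDenom; fun_prop : Measurable _).aestronglyMeasurable)
    (eventually_ge_atTop 2 |>.mono fun a ha t ht => norm_pow_div_anchorDenom_div_le hi ha ht)
    (integrable_inv_one_add_sq.const_mul 64)
    (fun t => tendsto_const_nhds.div (tendsto_anchorDenom_div t) (by positivity))
  refine h.congr' ?_
  filter_upwards [eventually_gt_atTop 0] with a ha using (Iij_succ_eq_integral_rescaled i ha).symm

/-- `lim_{a→∞} (9 I_{0,1}(a) − 144 I_{2,3}(a)) = 9∫(t²+1)^{-11/2} − 144∫t²(t²+1)^{-11/2}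
 = −256/35`. -/
theorem stmt_8 :
    Tendsto (fun a : ℝ => 9 * Iij 0 1 a - 144 * Iij 2 3 a) atTop
      (nhds (9 * (∫ t : ℝ, 1 / (t^2 + 1) ^ ((11:ℝ)/2))
        - 144 * (∫ t : ℝ, t^2 / (t^2 + 1) ^ ((11:ℝ)/2)))) ∧
    9 * (∫ t : ℝ, 1 / (t^2 + 1) ^ ((11:ℝ)/2))
        - 144 * (∫ t : ℝ, t^2 / (t^2 + 1) ^ ((11:ℝ)/2)) = -256/35 := by
  refine ⟨?_, by rw [integral_one_div_rpow_eleven_half, integral_sq_div_rpow_eleven_half]; norm_num⟩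
  have h0 := tendsto_Iij_succ (i := 0) (Nat.zero_le 2)
  simp only [pow_zero] at h0
  exact (h0.const_mul 9).sub ((tendsto_Iij_succ (i := 2) le_rfl).const_mul 144)
end

section
/- Stereographic projection π: S^{j+k+1} \ {(0,…,0,1)} → ℝ^{j+k+1}, π(x', x_{j+k+2}) = x'/(1 − x_{j+k+2}), maps the product S^j(r₁) × S^k(r₂) ⊂ S^{j+k+1} ⊂ ℝ^{j+1} × ℝ^{k+1} (with r₁² + r₂² = 1 and the base point (0,…,0,1) lying in {0} × ℝ^{k+1}) onto the anchor ring T^{j,k}_{R,r} = {((R + rw)y, rv) : y ∈ S^j, (v,w) ∈ S^k ⊂ ℝ^k × ℝ}, with R = 1/r₁ and r = r₂/r₁. -/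
/-!
Write a point of `S^k(r₂)` as `(v', w)`. Stereographic projection divides by `1 - w`, and the
whole argument is the change of height `w ↔ w₀` given by `(1 - w) * (1 + r₂ * w₀) = r₁ ^ 2`, a
Möbius map from `[-r₂, r₂]` onto `[-1, 1]`. Under it `r₁ / (1 - w) = 1 / r₁ + (r₂ / r₁) * w₀`,
so the first factor `y' = r₁ • y` lands at radius `R + r w₀`, and
`r₂ ^ 2 - w ^ 2 = ((1 - w) * (r₂ / r₁)) ^ 2 * (1 - w₀ ^ 2)` (using `r₁ ^ 2 + r₂ ^ 2 = 1`), so the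
remaining coordinate `v' / (1 - w)` is `r • v` with `(v, w₀)` on the unit sphere.
-/

section StereographicTorus

variable {E F : Type*} [NormedAddCommGroup E] [NormedSpace ℝ E]
  [NormedAddCommGroup F] [NormedSpace ℝ F] {r₁ r₂ w w₀ : ℝ}

lemma sq_sub_sq_eq_of_mul_eq (hr₁ : r₁ ≠ 0) (h : r₁ ^ 2 + r₂ ^ 2 = 1)
    (hrel : (1 - w) * (1 + r₂ * w₀) = r₁ ^ 2) :
    r₂ ^ 2 - w ^ 2 = ((1 - w) * (r₂ / r₁)) ^ 2 * (1 - w₀ ^ 2) := by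
  field_simp
  linear_combination ((1 - w) * (r₂ * w₀ + w) - (r₂ ^ 2 - w ^ 2)) * hrel +
    (1 - w) * (r₂ * w₀ + w) * h

lemma norm_smul_sq_add_sq_iff (hr₁ : r₁ ≠ 0) (hr₂ : r₂ ≠ 0) (h : r₁ ^ 2 + r₂ ^ 2 = 1)
    (hrel : (1 - w) * (1 + r₂ * w₀) = r₁ ^ 2) (v : F) :
    ‖((1 - w) * (r₂ / r₁)) • v‖ ^ 2 + w ^ 2 = r₂ ^ 2 ↔ ‖v‖ ^ 2 + w₀ ^ 2 = 1 := by
  have hw : 1 - w ≠ 0 := left_ne_zero_of_mul (hrel ▸ pow_ne_zero 2 hr₁)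
  have hc : ((1 - w) * (r₂ / r₁)) ^ 2 ≠ 0 := by positivity
  rw [norm_smul, mul_pow, Real.norm_eq_abs, sq_abs, ← eq_sub_iff_add_eq,
    sq_sub_sq_eq_of_mul_eq hr₁ h hrel, mul_right_inj' hc, eq_sub_iff_add_eq]

lemma inv_sub_smul_prod_eq_of_mul_eq (hr₁ : r₁ ≠ 0) (hrel : (1 - w) * (1 + r₂ * w₀) = r₁ ^ 2)
    (y : E) (v : F) :
    ((1 - w)⁻¹ • r₁ • y, (1 - w)⁻¹ • ((1 - w) * (r₂ / r₁)) • v) =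
      ((1 / r₁ + (r₂ / r₁) * w₀) • y, (r₂ / r₁) • v) := by
  have hw : 1 - w ≠ 0 := left_ne_zero_of_mul (hrel ▸ pow_ne_zero 2 hr₁)
  have hy : (1 - w)⁻¹ * r₁ = 1 / r₁ + (r₂ / r₁) * w₀ := by
    field_simp
    linear_combination -hrel
  rw [smul_smul, smul_smul, hy, inv_mul_cancel_left₀ hw]

end StereographicTorus

/-- Stereographic projection `π(x', x_last) = x'/(1 − x_last)` from the base point
`(0, (0,1))` maps the product `S^j(r₁) × S^k(r₂)` (with `r₁² + r₂² = 1`, points written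
as `(y', (v', w))` with `‖y'‖ = r₁` and `‖v'‖² + w² = r₂²`) onto the anchor ring
`T^{j,k}_{R,r} = {((R + r w₀)·y, r·v) : ‖y‖ = 1, ‖v‖² + w₀² = 1}` with `R = 1/r₁`,
`r = r₂/r₁`. -/
theorem stmt_16 {E F : Type*} [NormedAddCommGroup E] [NormedSpace ℝ E]
    [NormedAddCommGroup F] [NormedSpace ℝ F]
    (r₁ r₂ : ℝ) (h₁ : 0 < r₁) (h₂ : 0 < r₂) (h : r₁^2 + r₂^2 = 1) :
    {p : E × F | ∃ (y' : E) (v' : F) (w : ℝ), ‖y'‖ = r₁ ∧ ‖v'‖^2 + w^2 = r₂^2 ∧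
        p = ((1 - w)⁻¹ • y', (1 - w)⁻¹ • v')} =
    {p : E × F | ∃ (y : E) (v : F) (w₀ : ℝ), ‖y‖ = 1 ∧ ‖v‖^2 + w₀^2 = 1 ∧
        p = ((1/r₁ + (r₂/r₁) * w₀) • y, (r₂/r₁) • v)} := by
  have hr₂ : r₂ < 1 := by nlinarith
  have norm_smul_r₁ (y : E) : ‖r₁ • y‖ = r₁ ↔ ‖y‖ = 1 := by
    rw [norm_smul, Real.norm_of_nonneg h₁.le, mul_eq_left₀ h₁.ne']
  ext p
  constructor
  · rintro ⟨y', v', w, hy', hv', rfl⟩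
    have hw : 1 - w ≠ 0 := by nlinarith [sq_nonneg ‖v'‖]
    have hrel : (1 - w) * (1 + r₂ * ((r₁ ^ 2 / (1 - w) - 1) / r₂)) = r₁ ^ 2 := by
      field_simp
      ring
    obtain ⟨y, rfl⟩ : ∃ y, y' = r₁ • y := ⟨r₁⁻¹ • y', (smul_inv_smul₀ h₁.ne' y').symm⟩
    obtain ⟨v, rfl⟩ : ∃ v, v' = ((1 - w) * (r₂ / r₁)) • v :=
      ⟨_, (smul_inv_smul₀ (by positivity) v').symm⟩
    exact ⟨y, v, _, (norm_smul_r₁ y).1 hy',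
      (norm_smul_sq_add_sq_iff h₁.ne' h₂.ne' h hrel v).1 hv',
      inv_sub_smul_prod_eq_of_mul_eq h₁.ne' hrel y v⟩
  · rintro ⟨y, v, w₀, hy, hv, rfl⟩
    have hb : 1 + r₂ * w₀ ≠ 0 := by nlinarith [sq_nonneg ‖v‖, sq_nonneg (w₀ + 1)]
    have hrel : (1 - (1 - r₁ ^ 2 / (1 + r₂ * w₀))) * (1 + r₂ * w₀) = r₁ ^ 2 := by
      field_simp
      ring
    exact ⟨r₁ • y, _, _, (norm_smul_r₁ y).2 hy,
      (norm_smul_sq_add_sq_iff h₁.ne' h₂.ne' h hrel v).2 hv,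
      (inv_sub_smul_prod_eq_of_mul_eq h₁.ne' hrel y v).symm⟩
end
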